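/- With the Hoeffding decomposition, E[v_{(i·)} · v̄_{(ij)} | w_j] = (1/2)(1/3 - v_{(j·)}²) almost surely. -/

import Mathlib

/-!
Put `u = 2F - 1` and let `ν` be the common law of `wᵢ` and `wⱼ`. By independence, the conditional
expectation given `wⱼ = y` is the integral over `x ∼ ν` of `u(x) (sign(x - y) - u(x) + u(y))`.
Continuity of `F` means that `ν` has no atoms, so `ν`-a.e. `sign(x - y) = 1 - 2·𝟙{x ≤ y}`, and the
integral reduces to the moments `∫ F dν = 1/2`, `∫ F² dν = 1/3` and `∫_{x ≤ y} F dν = F(y)²/2`.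
All three come from the Fubini identity `∫∫_{z ≤ x} g(z) dν(z) dν(x) = ∫ g(z) ν[z, ∞) dν(z)`.
-/

open MeasureTheory ProbabilityTheory Set

@[fun_prop]
theorem Real.measurable_sign : Measurable Real.sign := by
  unfold Real.sign
  exact Measurable.ite measurableSet_Iio measurable_const
    (Measurable.ite measurableSet_Ioi measurable_const measurable_const)

lemma Real.abs_sign_le_one (r : ℝ) : |Real.sign r| ≤ 1 := by
  rcases Real.sign_apply_eq r with h | h | h <;> simp [h]

lemma sign_sub_ae_eq_indicator_Iic {ν : Measure ℝ} [NullSingletonClass ν] (y : ℝ) :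
    (fun x => Real.sign (x - y)) =ᵐ[ν] fun x => 1 - 2 * (Iic y).indicator 1 x := by
  filter_upwards [Measure.ae_ne ν y] with x hx
  rcases hx.lt_or_gt with h | h
  · norm_num [Real.sign_of_neg (sub_neg.2 h), h.le]
  · simp [Real.sign_of_pos (sub_pos.2 h), h.not_ge]

namespace ProbabilityTheory

section Independence

variable {Ω β γ E : Type*} {mΩ : MeasurableSpace Ω} {μ : Measure Ω} [IsFiniteMeasure μ]
  {mβ : MeasurableSpace β} {mγ : MeasurableSpace γ} [StandardBorelSpace β] [Nonempty β]
  [NormedAddCommGroup E] [NormedSpace ℝ E] [CompleteSpace E] {X : Ω → β} {Y : Ω → γ}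

lemma condDistrib_ae_eq_const_of_indepFun (hX : Measurable X) (hY : Measurable Y)
    (h : IndepFun X Y μ) : condDistrib X Y μ =ᵐ[μ.map Y] Kernel.const γ (μ.map X) := by
  rw [condDistrib_ae_eq_iff_measure_eq_compProd Y hX.aemeasurable, Measure.compProd_const,
    (indepFun_iff_map_prod_eq_prod_map_map hY.aemeasurable hX.aemeasurable).mp h.symm]

theorem condExp_comap_ae_eq_integral_of_indepFun (hX : Measurable X) (hY : Measurable Y)
    (h : IndepFun X Y μ) {f : γ × β → E} (hf : Integrable f ((μ.map Y).prod (μ.map X))) :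
    μ[fun ω => f (Y ω, X ω) | mγ.comap Y] =ᵐ[μ] fun ω => ∫ x, f (Y ω, x) ∂(μ.map X) := by
  rw [← (indepFun_iff_map_prod_eq_prod_map_map hY.aemeasurable hX.aemeasurable).mp h.symm] at hf
  filter_upwards [condExp_prod_ae_eq_integral_condDistrib' hY hX.aemeasurable hf,
    ae_of_ae_map hY.aemeasurable (condDistrib_ae_eq_const_of_indepFun hX hY h)] with ω h1 h2
  rw [h1, h2, Kernel.const_apply]

end Independence

theorem integral_setIntegral_Iic {ρ : Measure ℝ} [IsFiniteMeasure ρ] (g : ℝ → ℝ)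
    (hg : Integrable g ρ) : ∫ x, ∫ z in Iic x, g z ∂ρ ∂ρ = ∫ z, ρ.real (Ici z) * g z ∂ρ := by
  have hint : Integrable ({p : ℝ × ℝ | p.2 ≤ p.1}.indicator fun p => g p.2) (ρ.prod ρ) :=
    (hg.comp_snd ρ).indicator (measurableSet_le measurable_snd measurable_fst)
  calc ∫ x, ∫ z in Iic x, g z ∂ρ ∂ρ
      = ∫ x, ∫ z, {p : ℝ × ℝ | p.2 ≤ p.1}.indicator (fun p => g p.2) (x, z) ∂ρ ∂ρ := by
        simp_rw [← integral_indicator measurableSet_Iic, indicator_apply, mem_Iic, mem_ofPred_eq]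
    _ = ∫ z, ∫ x, {p : ℝ × ℝ | p.2 ≤ p.1}.indicator (fun p => g p.2) (x, z) ∂ρ ∂ρ :=
        integral_integral_swap hint
    _ = ∫ z, ρ.real (Ici z) * g z ∂ρ := by
        congr 1 with z
        rw [← smul_eq_mul, ← setIntegral_const, ← integral_indicator measurableSet_Ici]
        simp_rw [indicator_apply, mem_Ici, mem_ofPred_eq]

section ContinuousCDF

variable {ν : Measure ℝ}

@[fun_prop]
lemma measurable_cdf : Measurable (cdf ν) := (monotone_cdf ν).measurable

lemma abs_two_mul_cdf_sub_one_le (x : ℝ) : |2 * cdf ν x - 1| ≤ 1 :=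
  abs_le.2 ⟨by linarith [cdf_nonneg ν x], by linarith [cdf_le_one ν x]⟩

variable [IsProbabilityMeasure ν]

lemma nullSingletonClass_of_continuous_cdf (h : Continuous (cdf ν)) : NullSingletonClass ν where
  measure_singleton x := by
    rw [← measure_cdf ν, StieltjesFunction.measure_singleton,
      h.continuousWithinAt.leftLim_eq, sub_self, ENNReal.ofReal_zero]

lemma integrable_cdf : Integrable (cdf ν) ν :=
  .of_bound measurable_cdf.aestronglyMeasurable 1 <| ae_of_all _ fun x => by
    rw [Real.norm_of_nonneg (cdf_nonneg ν x)]
    exact cdf_le_one ν x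

lemma integrable_cdf_sq : Integrable (fun x => cdf ν x ^ 2) ν :=
  .of_bound (by fun_prop) 1 <| ae_of_all _ fun x => by
    rw [norm_pow, Real.norm_of_nonneg (cdf_nonneg ν x)]
    exact pow_le_one₀ (cdf_nonneg ν x) (cdf_le_one ν x)

lemma integrable_two_mul_cdf_sub_one : Integrable (fun x => 2 * cdf ν x - 1) ν :=
  (integrable_cdf.const_mul 2).sub (integrable_const 1)

variable [NullSingletonClass ν]

lemma measureReal_Ici_eq_one_sub_cdf (z : ℝ) : ν.real (Ici z) = 1 - cdf ν z := by
  rw [← compl_Iio, probReal_compl_eq_one_sub measurableSet_Iio, measureReal_congr Iio_ae_eq_Iic,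
    cdf_eq_real]

lemma measureReal_Icc_eq_cdf_sub_cdf {z y : ℝ} (h : z ≤ y) :
    ν.real (Icc z y) = cdf ν y - cdf ν z := by
  rw [← measureReal_congr Ioc_ae_eq_Icc, ← Iic_sdiff_Iic, measureReal_sdiff (Iic_subset_Iic.2 h)
    measurableSet_Iic, cdf_eq_real, cdf_eq_real]

theorem integral_cdf : ∫ x, cdf ν x ∂ν = 1 / 2 := by
  have h := integral_setIntegral_Iic (ρ := ν) 1 (integrable_const 1)
  simp only [Pi.one_apply, setIntegral_const, smul_eq_mul, mul_one, ← cdf_eq_real,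
    measureReal_Ici_eq_one_sub_cdf] at h
  rw [integral_sub (integrable_const 1) integrable_cdf, integral_const] at h
  simp only [probReal_univ, smul_eq_mul, mul_one] at h
  linarith

theorem setIntegral_Iic_cdf (y : ℝ) : ∫ x in Iic y, cdf ν x ∂ν = cdf ν y ^ 2 / 2 := by
  have h := integral_setIntegral_Iic (ρ := ν.restrict (Iic y)) 1 (integrable_const 1)
  simp only [Pi.one_apply, setIntegral_const, smul_eq_mul, mul_one,
    measureReal_restrict_apply measurableSet_Iic, measureReal_restrict_apply measurableSet_Ici,
    Iic_inter_Iic, Ici_inter_Iic] at h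
  have hL : ∫ x in Iic y, ν.real (Iic (min x y)) ∂ν = ∫ x in Iic y, cdf ν x ∂ν :=
    setIntegral_congr_fun measurableSet_Iic fun x hx => by rw [min_eq_left hx, cdf_eq_real]
  have hR : ∫ z in Iic y, ν.real (Icc z y) ∂ν = ∫ z in Iic y, (cdf ν y - cdf ν z) ∂ν :=
    setIntegral_congr_fun measurableSet_Iic fun z hz => measureReal_Icc_eq_cdf_sub_cdf hz
  rw [hL, hR, integral_sub (integrable_const _) integrable_cdf.integrableOn, setIntegral_const,
    ← cdf_eq_real, smul_eq_mul] at h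
  linarith

theorem integral_cdf_sq : ∫ x, cdf ν x ^ 2 ∂ν = 1 / 3 := by
  have h := integral_setIntegral_Iic (ρ := ν) (cdf ν) integrable_cdf
  have hR : ∫ z, (1 - cdf ν z) * cdf ν z ∂ν = ∫ z, cdf ν z ∂ν - ∫ z, cdf ν z ^ 2 ∂ν := by
    rw [← integral_sub integrable_cdf integrable_cdf_sq]
    congr with z
    ring
  simp only [setIntegral_Iic_cdf, measureReal_Ici_eq_one_sub_cdf] at h
  rw [integral_div, hR, integral_cdf] at h
  linarith

theorem integral_two_mul_cdf_sub_one : ∫ x, (2 * cdf ν x - 1) ∂ν = 0 := by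
  rw [integral_sub (integrable_cdf.const_mul 2) (integrable_const 1), integral_const_mul,
    integral_cdf]
  simp

theorem integral_two_mul_cdf_sub_one_sq : ∫ x, (2 * cdf ν x - 1) ^ 2 ∂ν = 1 / 3 := by
  have h : ∀ x, (2 * cdf ν x - 1) ^ 2 = 4 * (cdf ν x ^ 2 - cdf ν x) + 1 := fun x => by ring
  simp_rw [h]
  rw [integral_add (f := fun x => 4 * (cdf ν x ^ 2 - cdf ν x))
      ((integrable_cdf_sq.sub integrable_cdf).const_mul 4) (integrable_const 1),
    integral_const_mul, integral_sub integrable_cdf_sq integrable_cdf, integral_cdf_sq,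
    integral_cdf]
  norm_num

theorem setIntegral_Iic_two_mul_cdf_sub_one (y : ℝ) :
    ∫ x in Iic y, (2 * cdf ν x - 1) ∂ν = cdf ν y ^ 2 - cdf ν y := by
  rw [integral_sub (integrable_cdf.integrableOn.const_mul 2) (integrableOn_const (by simp)),
    integral_const_mul, setIntegral_Iic_cdf, setIntegral_const, ← cdf_eq_real, smul_eq_mul]
  ring

theorem integral_two_mul_cdf_sub_one_mul_sign (y : ℝ) :
    ∫ x, (2 * cdf ν x - 1) * Real.sign (x - y) ∂ν = 2 * cdf ν y * (1 - cdf ν y) := by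
  have hae : (fun x => (2 * cdf ν x - 1) * Real.sign (x - y)) =ᵐ[ν]
      fun x => (2 * cdf ν x - 1) - 2 * (Iic y).indicator (fun x => 2 * cdf ν x - 1) x := by
    filter_upwards [sign_sub_ae_eq_indicator_Iic y] with x hx
    by_cases h : x ≤ y
    · simp [hx, h]
      ring
    · simp [hx, h]
  rw [integral_congr_ae hae, integral_sub integrable_two_mul_cdf_sub_one
    ((integrable_two_mul_cdf_sub_one.indicator measurableSet_Iic).const_mul 2),
    integral_const_mul, integral_indicator measurableSet_Iic, integral_two_mul_cdf_sub_one,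
    setIntegral_Iic_two_mul_cdf_sub_one]
  ring

theorem integral_mul_hoeffdingRemainder (y : ℝ) :
    ∫ x, (2 * cdf ν x - 1) * (Real.sign (x - y) - ((2 * cdf ν x - 1) - (2 * cdf ν y - 1))) ∂ν
      = 1 / 2 * (1 / 3 - (2 * cdf ν y - 1) ^ 2) := by
  have hu := integrable_two_mul_cdf_sub_one (ν := ν)
  have hu_sign : Integrable (fun x => (2 * cdf ν x - 1) * Real.sign (x - y)) ν :=
    hu.mul_bdd (Real.measurable_sign.comp (measurable_id.sub_const y)).aestronglyMeasurable
      (ae_of_all _ fun x => (Real.norm_eq_abs _).trans_le (Real.abs_sign_le_one _))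
  have hu_sq : Integrable (fun x => (2 * cdf ν x - 1) ^ 2) ν := by
    simpa only [sq] using hu.mul_bdd (by fun_prop)
      (ae_of_all _ fun x => (Real.norm_eq_abs _).trans_le (abs_two_mul_cdf_sub_one_le x))
  have h : ∀ x, (2 * cdf ν x - 1) * (Real.sign (x - y) - ((2 * cdf ν x - 1) - (2 * cdf ν y - 1)))
      = ((2 * cdf ν x - 1) * Real.sign (x - y) - (2 * cdf ν x - 1) ^ 2)
        + (2 * cdf ν y - 1) * (2 * cdf ν x - 1) := fun x => by ring
  simp_rw [h]
  rw [integral_add (f := fun x => (2 * cdf ν x - 1) * Real.sign (x - y) - (2 * cdf ν x - 1) ^ 2)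
      (hu_sign.sub hu_sq) (hu.const_mul _), integral_sub hu_sign hu_sq,
    integral_const_mul, integral_two_mul_cdf_sub_one_mul_sign, integral_two_mul_cdf_sub_one_sq,
    integral_two_mul_cdf_sub_one]
  ring

end ContinuousCDF

end ProbabilityTheory

/-- For the Hoeffding decomposition, `E[v₍ᵢ·₎ · v̄₍ᵢⱼ₎ | wⱼ] = (1/2)(1/3 - v₍ⱼ·₎²)`
almost surely, where `v₍ᵢ·₎ = 2F(wᵢ)-1` and `v₍ⱼ·₎ = 2F(wⱼ)-1`. -/
theorem statement4 {Ω : Type*} [MeasurableSpace Ω] (μ : Measure Ω) [IsProbabilityMeasure μ]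
    (wi wj : Ω → ℝ) (hi : Measurable wi) (hj : Measurable wj)
    (hindep : IndepFun wi wj μ)
    (hid : Measure.map wi μ = Measure.map wj μ)
    (F : ℝ → ℝ) (hF : ∀ x, F x = (μ {ω | wi ω ≤ x}).toReal)
    (hFc : Continuous F)
    (vbar : Ω → ℝ)
    (hvbar : ∀ ω, vbar ω =
      Real.sign (wi ω - wj ω) - ((2 * F (wi ω) - 1) - (2 * F (wj ω) - 1))) :
    μ[(fun ω => (2 * F (wi ω) - 1) * vbar ω) | MeasurableSpace.comap wj inferInstance]
      =ᵐ[μ] fun ω => (1 / 2) * (1 / 3 - (2 * F (wj ω) - 1) ^ 2) := by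
  set ν := μ.map wj
  have : IsProbabilityMeasure ν := Measure.isProbabilityMeasure_map hj.aemeasurable
  obtain rfl : F = cdf ν := funext fun x => by
    rw [hF, cdf_eq_real, ← hid, measureReal_def, Measure.map_apply hi measurableSet_Iic]
    rfl
  have : NullSingletonClass ν := nullSingletonClass_of_continuous_cdf hFc
  set G : ℝ × ℝ → ℝ := fun p =>
    (2 * cdf ν p.2 - 1) * (Real.sign (p.2 - p.1) - ((2 * cdf ν p.2 - 1) - (2 * cdf ν p.1 - 1)))
  have hG : Integrable G (ν.prod ν) := by
    refine .of_bound (by fun_prop) 3 (ae_of_all _ fun p => ?_)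
    have ha := abs_le.1 (abs_two_mul_cdf_sub_one_le (ν := ν) p.1)
    have hb := abs_le.1 (abs_two_mul_cdf_sub_one_le (ν := ν) p.2)
    have hs := abs_le.1 (Real.abs_sign_le_one (p.2 - p.1))
    rw [Real.norm_eq_abs, abs_le]
    constructor <;> nlinarith
  have hcond := condExp_comap_ae_eq_integral_of_indepFun hi hj hindep (f := G) (by rwa [hid])
  simp_rw [hvbar]
  filter_upwards [hcond] with ω hω
  rw [hω, hid]
  exact integral_mul_hoeffdingRemainder (wj ω)
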